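/- arXiv:2111.14404 — 2 statements merged into one kernel-verified Lean document; each statement's English description precedes it below -/
import Mathlib

section
/- A point x₀ ∈ ℝⁿ belongs to the weakly unobservable subspace V*(Σ) of the system ẋ = Ax + Bu, y = Cx + Du if and only if there exists a linear feedback matrix F ∈ ℝ^{m×n} such that (A + BF)V*(Σ) ⊆ V*(Σ) and (C + DF) restricted to V*(Σ) is zero, and x₀ lies in the largest subspace V with (A + BF)V ⊆ V and (C + DF)V = 0 for some F. -/
/-! The weakly unobservable points form a closed subspace `V*`. A zero-output trajectory shifted
in time is again one, so it stays in `V*`; hence its velocity `A x₀ + B u(0)` at time `0` lies in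
`V*`, and choosing such inputs linearly on a basis of `V*` yields a feedback for `V*`. Conversely,
for a feedback `F` of `V`, the trajectory `exp (t (A + B F)) x₀` with input `F x(t)` stays in `V`
and has zero output, so `V ≤ V*`. Thus `V*` is the largest feedback-invariant subspace. -/

open Matrix

/-- The set of weakly unobservable points: initial states `x₀` for which there is
an input `u` making the output identically zero for all `t ≥ 0`. -/
def weaklyUnobservable (n m p : ℕ)
    (A : Matrix (Fin n) (Fin n) ℝ) (B : Matrix (Fin n) (Fin m) ℝ)
    (C : Matrix (Fin p) (Fin n) ℝ) (D : Matrix (Fin p) (Fin m) ℝ) :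
    Set (Fin n → ℝ) :=
  {x₀ | ∃ (x : ℝ → Fin n → ℝ) (u : ℝ → Fin m → ℝ),
    x 0 = x₀ ∧
    (∀ t : ℝ, 0 ≤ t → HasDerivAt x (A.mulVec (x t) + B.mulVec (u t)) t) ∧
    (∀ t : ℝ, 0 ≤ t → C.mulVec (x t) + D.mulVec (u t) = 0)}

/-- A subspace `V` is `(A+BF, C+DF)`-invariant-with-zero-output for the feedback `F`. -/
def FeedbackInvariant (n m p : ℕ)
    (A : Matrix (Fin n) (Fin n) ℝ) (B : Matrix (Fin n) (Fin m) ℝ)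
    (C : Matrix (Fin p) (Fin n) ℝ) (D : Matrix (Fin p) (Fin m) ℝ)
    (V : Submodule ℝ (Fin n → ℝ)) : Prop :=
  ∃ F : Matrix (Fin m) (Fin n) ℝ,
    (∀ v ∈ V, (A + B * F).mulVec v ∈ V) ∧ (∀ v ∈ V, (C + D * F).mulVec v = 0)

section

variable {E : Type*} [NormedAddCommGroup E] [NormedSpace ℝ E]

theorem HasDerivAt.mem_of_forall_ge_mem {V : Submodule ℝ E} (hV : IsClosed (V : Set E))
    {x : ℝ → E} {x' : E} {t₀ : ℝ} (hd : HasDerivAt x x' t₀) (hx : ∀ t, t₀ ≤ t → x t ∈ V) :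
    x' ∈ V := by
  refine hV.mem_of_tendsto (hasDerivAt_iff_tendsto_slope_left_right.mp hd).2 ?_
  filter_upwards [self_mem_nhdsWithin] with t (ht : t₀ < t)
  rw [slope_def_module]
  exact V.smul_mem _ (V.sub_mem (hx t ht.le) (hx t₀ le_rfl))

end

theorem LinearMap.exists_forall_add_mem {K E U F : Type*} [Field K] [AddCommGroup E] [Module K E]
    [AddCommGroup U] [Module K U] [AddCommGroup F] [Module K F]
    {V : Submodule K E} {P : Submodule K F} (f : E →ₗ[K] F) (g : U →ₗ[K] F)
    (h : ∀ v ∈ V, ∃ u, f v + g u ∈ P) : ∃ G : E →ₗ[K] U, ∀ v ∈ V, f v + g (G v) ∈ P := by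
  let b := Module.Basis.ofVectorSpace K V
  choose u hu using fun i => h (b i) (b i).2
  obtain ⟨G, hG⟩ := LinearMap.exists_extend (b.constr K u)
  refine ⟨G, fun v hv => ?_⟩
  have hspan : (⊤ : Submodule K V) ≤ P.comap ((f + g ∘ₗ G) ∘ₗ V.subtype) := by
    rw [← b.span_eq, Submodule.span_le]
    rintro _ ⟨i, rfl⟩
    have hGb : G (b i) = u i := by
      rw [← b.constr_basis K u i, ← hG]; rfl
    simpa [hGb] using hu i
  exact hspan (Submodule.mem_top (x := ⟨v, hv⟩))

def Submodule.matrixStabilizer {ι R : Type*} [Fintype ι] [DecidableEq ι] [CommRing R]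
    (V : Submodule R (ι → R)) : Subalgebra R (Matrix ι ι R) where
  carrier := {N | ∀ v ∈ V, N *ᵥ v ∈ V}
  mul_mem' hM hN v hv := by rw [← mulVec_mulVec]; exact hM _ (hN v hv)
  add_mem' hM hN v hv := by rw [add_mulVec]; exact V.add_mem (hM v hv) (hN v hv)
  algebraMap_mem' r v hv := by
    rw [Algebra.algebraMap_eq_smul_one, smul_mulVec, one_mulVec]
    exact V.smul_mem r hv

theorem Submodule.isClosed_matrixStabilizer {ι R : Type*} [Fintype ι] [DecidableEq ι] [CommRing R]
    [TopologicalSpace R] [IsTopologicalRing R] {V : Submodule R (ι → R)}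
    (hV : IsClosed (V : Set (ι → R))) : IsClosed (V.matrixStabilizer : Set (Matrix ι ι R)) := by
  have : (V.matrixStabilizer : Set (Matrix ι ι R)) = ⋂ v ∈ V, (· *ᵥ v) ⁻¹' V := by
    ext N; simp [Submodule.matrixStabilizer]
  rw [this]
  exact isClosed_biInter fun v _ => hV.preimage (continuous_id.matrix_mulVec continuous_const)

theorem Matrix.exp_mulVec_mem {ι : Type*} [Fintype ι] [DecidableEq ι] {V : Submodule ℝ (ι → ℝ)}
    {M : Matrix ι ι ℝ} (hM : ∀ v ∈ V, M *ᵥ v ∈ V) {v : ι → ℝ} (hv : v ∈ V) :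
    NormedSpace.exp M *ᵥ v ∈ V :=
  NormedSpace.exp_mem (R := ℝ) (s := V.matrixStabilizer)
    (Submodule.isClosed_matrixStabilizer V.closed_of_finiteDimensional) hM v hv

section

attribute [local instance] Matrix.linftyOpNormedAddCommGroup Matrix.linftyOpNormedRing
  Matrix.linftyOpNormedAlgebra

theorem Matrix.hasDerivAt_exp_smul_mulVec {ι : Type*} [Fintype ι] [DecidableEq ι]
    (M : Matrix ι ι ℝ) (v : ι → ℝ) (t : ℝ) :
    HasDerivAt (fun s : ℝ => NormedSpace.exp (s • M) *ᵥ v)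
      (M *ᵥ (NormedSpace.exp (t • M) *ᵥ v)) t := by
  let evalAt : Matrix ι ι ℝ →L[ℝ] ι → ℝ :=
    LinearMap.toContinuousLinearMap (LinearMap.applyₗ v ∘ₗ Matrix.toLin'.toLinearMap)
  exact (evalAt.hasFDerivAt.comp_hasDerivAt t (hasDerivAt_exp_smul_const' (𝕂 := ℝ) M t)).congr_deriv
    (mulVec_mulVec _ _ _).symm

end

section

variable {n m p : ℕ} {A : Matrix (Fin n) (Fin n) ℝ} {B : Matrix (Fin n) (Fin m) ℝ}
  {C : Matrix (Fin p) (Fin n) ℝ} {D : Matrix (Fin p) (Fin m) ℝ}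

theorem feedbackInvariant_of_forall_exists {V : Submodule ℝ (Fin n → ℝ)}
    (h : ∀ v ∈ V, ∃ u, A *ᵥ v + B *ᵥ u ∈ V ∧ C *ᵥ v + D *ᵥ u = 0) :
    FeedbackInvariant n m p A B C D V := by
  obtain ⟨G, hG⟩ := LinearMap.exists_forall_add_mem (P := V.prod ⊥)
    (A.mulVecLin.prod C.mulVecLin) (B.mulVecLin.prod D.mulVecLin) (by simpa using h)
  refine ⟨LinearMap.toMatrix' G, fun v hv => ?_, fun v hv => ?_⟩
  · simpa [add_mulVec, ← mulVec_mulVec] using (hG v hv).1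
  · simpa [add_mulVec, ← mulVec_mulVec] using (hG v hv).2

variable (n m p A B C D) in
def weaklyUnobservableSubmodule : Submodule ℝ (Fin n → ℝ) where
  carrier := weaklyUnobservable n m p A B C D
  zero_mem' := ⟨0, 0, rfl, fun t _ => (hasDerivAt_const t 0).congr_deriv (by simp),
    fun _ _ => by simp⟩
  add_mem' := by
    rintro _ _ ⟨x₁, u₁, rfl, hd₁, hy₁⟩ ⟨x₂, u₂, rfl, hd₂, hy₂⟩
    refine ⟨x₁ + x₂, u₁ + u₂, rfl, fun t ht => ?_, fun t ht => ?_⟩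
    · refine ((hd₁ t ht).add (hd₂ t ht)).congr_deriv ?_
      simp only [Pi.add_apply, mulVec_add, add_add_add_comm]
    · simp only [Pi.add_apply, mulVec_add]
      rw [add_add_add_comm, hy₁ t ht, hy₂ t ht, add_zero]
  smul_mem' := by
    rintro c _ ⟨x, u, rfl, hd, hy⟩
    refine ⟨c • x, c • u, rfl, fun t ht => ?_, fun t ht => ?_⟩
    · refine ((hd t ht).const_smul c).congr_deriv ?_
      simp only [Pi.smul_apply, mulVec_smul, smul_add]
    · simp only [Pi.smul_apply, mulVec_smul, ← smul_add, hy t ht, smul_zero]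

theorem exists_input_of_mem_weaklyUnobservable {x₀ : Fin n → ℝ}
    (hx₀ : x₀ ∈ weaklyUnobservable n m p A B C D) :
    ∃ u, A *ᵥ x₀ + B *ᵥ u ∈ weaklyUnobservable n m p A B C D ∧ C *ᵥ x₀ + D *ᵥ u = 0 := by
  obtain ⟨x, u, rfl, hd, hy⟩ := hx₀
  refine ⟨u 0, ?_, hy 0 le_rfl⟩
  have hshift : ∀ s, 0 ≤ s → x s ∈ weaklyUnobservableSubmodule n m p A B C D := fun s hs =>
    ⟨fun t => x (t + s), fun t => u (t + s), by simp,
      fun t ht => (hd (t + s) (by linarith)).comp_add_const t s,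
      fun t ht => hy (t + s) (by linarith)⟩
  exact (hd 0 le_rfl).mem_of_forall_ge_mem (Submodule.closed_of_finiteDimensional _) hshift

theorem FeedbackInvariant.le_weaklyUnobservable {V : Submodule ℝ (Fin n → ℝ)}
    (hV : FeedbackInvariant n m p A B C D V) : V ≤ weaklyUnobservableSubmodule n m p A B C D := by
  obtain ⟨F, hinv, hout⟩ := hV
  intro x₀ hx₀
  have hmem : ∀ t : ℝ, NormedSpace.exp (t • (A + B * F)) *ᵥ x₀ ∈ V := fun t =>
    Matrix.exp_mulVec_mem (fun v hv => by rw [smul_mulVec]; exact V.smul_mem t (hinv v hv)) hx₀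
  refine ⟨fun t => NormedSpace.exp (t • (A + B * F)) *ᵥ x₀,
    fun t => F *ᵥ (NormedSpace.exp (t • (A + B * F)) *ᵥ x₀), by simp, fun t _ => ?_, fun t _ => ?_⟩
  · have h := Matrix.hasDerivAt_exp_smul_mulVec (A + B * F) x₀ t
    rwa [add_mulVec, ← mulVec_mulVec] at h
  · have h := hout _ (hmem t)
    rwa [add_mulVec, ← mulVec_mulVec] at h

end

/-- `x₀ ∈ V*(Σ)` iff there is a feedback making `V*` invariant with zero output and
`x₀` lies in the largest subspace `V` with `(A+BF)V ⊆ V` and `(C+DF)V = 0` for some `F`. -/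
theorem mem_weaklyUnobservable_iff (n m p : ℕ)
    (A : Matrix (Fin n) (Fin n) ℝ) (B : Matrix (Fin n) (Fin m) ℝ)
    (C : Matrix (Fin p) (Fin n) ℝ) (D : Matrix (Fin p) (Fin m) ℝ)
    (x₀ : Fin n → ℝ) :
    x₀ ∈ weaklyUnobservable n m p A B C D ↔
      ∃ V : Submodule ℝ (Fin n → ℝ),
        FeedbackInvariant n m p A B C D V ∧
        (∀ W : Submodule ℝ (Fin n → ℝ), FeedbackInvariant n m p A B C D W → W ≤ V) ∧
        x₀ ∈ V := by
  have hfeedback : FeedbackInvariant n m p A B C D (weaklyUnobservableSubmodule n m p A B C D) :=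
    feedbackInvariant_of_forall_exists fun _ => exists_input_of_mem_weaklyUnobservable
  constructor
  · exact fun hx₀ => ⟨_, hfeedback, fun W hW => hW.le_weaklyUnobservable, hx₀⟩
  · rintro ⟨V, hV, -, hx₀⟩
    exact hV.le_weaklyUnobservable hx₀
end

section
/- Let K be a (p−m₀)×p matrix of full row rank with KD = 0, where m₀ = rank D. Then the rank condition rank [[CB, D],[D, 0]] = rank D + rank [B; D] holds if and only if rank [KCB; D] = rank [B; D]. -/
/-!
As `K` annihilates `D` and `rank K + rank D = p`, `ker K = range D`. So `(x, y)` lies in the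
kernel of `[[CB, D], [D, 0]]` iff `Dx = 0` and `CBx ∈ range D = ker K`, i.e. `x ∈ ker [KCB; D]`,
and then `y` is determined up to `ker D`. This gives
`nullity [[CB, D], [D, 0]] = nullity [KCB; D] + nullity D`, hence by rank–nullity
`rank [[CB, D], [D, 0]] = rank D + rank [KCB; D]`, from which the equivalence is immediate.
-/

open Matrix LinearMap Module

namespace Matrix

variable {R : Type*} [Field R] {l m m' p q : Type*} [Fintype m] [Fintype m']

theorem rank_add_finrank_ker_mulVecLin (A : Matrix p m R) :
    A.rank + finrank R (ker A.mulVecLin) = Fintype.card m := by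
  rw [rank, finrank_range_add_finrank_ker, finrank_fintype_fun_eq_card]

theorem ker_mulVecLin_fromRows (A : Matrix p m R) (B : Matrix q m R) :
    ker (fromRows A B).mulVecLin = ker A.mulVecLin ⊓ ker B.mulVecLin := by
  ext x
  simp [fromRows_mulVec, ← Sum.elim_zero_zero, Sum.elim_eq_iff]

theorem ker_mulVecLin_eq_range_mulVecLin_of_mul_eq_zero [Fintype p] [Fintype l]
    {K : Matrix l p R} {D : Matrix p m' R} (hKD : K * D = 0)
    (hrank : K.rank + D.rank = Fintype.card p) :
    ker K.mulVecLin = range D.mulVecLin := by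
  have hle : range D.mulVecLin ≤ ker K.mulVecLin := by
    rw [range_le_ker_iff, ← mulVecLin_mul, hKD, mulVecLin_zero]
  refine (Submodule.eq_of_le_of_finrank_le hle ?_).symm
  have := K.rank_add_finrank_ker_mulVecLin
  rw [← hrank] at this
  exact (Nat.add_left_cancel this).le

variable (A : Matrix p m R) (D : Matrix p m' R) (E : Matrix q m R)

theorem fromBlocks_zero₂₂_mulVec_sumElim_eq_zero_iff (x : m → R) (y : m' → R) :
    fromBlocks A D E 0 *ᵥ Sum.elim x y = 0 ↔ A *ᵥ x + D *ᵥ y = 0 ∧ E *ᵥ x = 0 := by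
  simp [fromBlocks_mulVec, ← Sum.elim_zero_zero, Sum.elim_eq_iff]

variable {A D E} [Fintype p] {K : Matrix l p R}

theorem map_funLeft_inl_ker_fromBlocks_zero₂₂ (hK : ker K.mulVecLin = range D.mulVecLin) :
    (ker (fromBlocks A D E 0).mulVecLin).map (funLeft R R Sum.inl) =
      ker (fromRows (K * A) E).mulVecLin := by
  rw [ker_mulVecLin_fromRows, mulVecLin_mul, ker_comp, hK]
  ext x
  simp only [Submodule.mem_map, Submodule.mem_inf, Submodule.mem_comap, LinearMap.mem_range,
    mem_ker, mulVecLin_apply]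
  constructor
  · rintro ⟨v, hv, rfl⟩
    rw [← Sum.elim_comp_inl_inr v, fromBlocks_zero₂₂_mulVec_sumElim_eq_zero_iff] at hv
    refine ⟨⟨-(v ∘ Sum.inr), ?_⟩, hv.2⟩
    rw [mulVec_neg, neg_eq_iff_add_eq_zero, add_comm]
    exact hv.1
  · rintro ⟨⟨y, hy⟩, hE⟩
    refine ⟨Sum.elim x (-y), ?_, rfl⟩
    rw [fromBlocks_zero₂₂_mulVec_sumElim_eq_zero_iff, mulVec_neg, hy, add_neg_cancel]
    exact ⟨rfl, hE⟩

theorem finrank_ker_fromBlocks_zero₂₂ (hK : ker K.mulVecLin = range D.mulVecLin) :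
    finrank R (ker (fromBlocks A D E 0).mulVecLin) =
      finrank R (ker (fromRows (K * A) E).mulVecLin) + finrank R (ker D.mulVecLin) := by
  set M := ker (fromBlocks A D E 0).mulVecLin
  let π : M →ₗ[R] m → R := (funLeft R R Sum.inl).domRestrict M
  have hπ : range π = ker (fromRows (K * A) E).mulVecLin := by
    rw [range_domRestrict, map_funLeft_inl_ker_fromBlocks_zero₂₂ hK]
  let ι : ker D.mulVecLin →ₗ[R] M :=
    codRestrict M ((LinearEquiv.sumArrowLequivProdArrow m m' R R).symm.toLinearMap ∘ₗ
      inr R _ _ ∘ₗ (ker D.mulVecLin).subtype) fun y ↦ by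
        change fromBlocks A D E 0 *ᵥ Sum.elim 0 (y : m' → R) = 0
        rw [fromBlocks_zero₂₂_mulVec_sumElim_eq_zero_iff, mulVec_zero, mulVec_zero, zero_add]
        exact ⟨y.2, rfl⟩
  have hι : Function.Injective ι := fun y y' h ↦
    Subtype.ext <| funext fun b ↦ congrFun (congrArg Subtype.val h) (Sum.inr b)
  have hker : ker π = range ι := by
    refine le_antisymm (fun ⟨v, hvM⟩ hv ↦ ?_) (range_le_ker_iff.2 rfl)
    have hinl : v ∘ Sum.inl = 0 := hv
    rw [← Sum.elim_comp_inl_inr v, hinl, mem_ker, mulVecLin_apply,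
      fromBlocks_zero₂₂_mulVec_sumElim_eq_zero_iff, mulVec_zero, zero_add] at hvM
    refine ⟨⟨v ∘ Sum.inr, hvM.1⟩, Subtype.ext ?_⟩
    change Sum.elim (0 : m → R) (v ∘ Sum.inr) = v
    rw [← hinl, Sum.elim_comp_inl_inr]
  rw [← finrank_range_add_finrank_ker π, hπ, hker, finrank_range_of_inj hι]

theorem rank_fromBlocks_zero₂₂ (hK : ker K.mulVecLin = range D.mulVecLin) :
    (fromBlocks A D E 0).rank = D.rank + (fromRows (K * A) E).rank := by
  have hM := (fromBlocks A D E 0).rank_add_finrank_ker_mulVecLin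
  have hN := (fromRows (K * A) E).rank_add_finrank_ker_mulVecLin
  have hD := D.rank_add_finrank_ker_mulVecLin
  rw [Fintype.card_sum, finrank_ker_fromBlocks_zero₂₂ hK] at hM
  omega

end Matrix

/-- With `K` a full-row-rank left annihilator of `D`, the rank condition
`rank [[CB, D],[D, 0]] = rank D + rank [B; D]` holds iff `rank [KCB; D] = rank [B; D]`. -/
theorem rank_condition_iff (n m p : ℕ)
    (B : Matrix (Fin n) (Fin m) ℝ) (C : Matrix (Fin p) (Fin n) ℝ)
    (D : Matrix (Fin p) (Fin m) ℝ)
    (K : Matrix (Fin (p - D.rank)) (Fin p) ℝ)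
    (hK : K.rank = p - D.rank) (hKD : K * D = 0) :
    (Matrix.fromBlocks (C * B) D D (0 : Matrix (Fin p) (Fin m) ℝ)).rank
        = D.rank + (Matrix.fromRows B D).rank ↔
      (Matrix.fromRows (K * (C * B)) D).rank = (Matrix.fromRows B D).rank := by
  have hDp : D.rank ≤ p := D.rank_le_height
  have hker : ker K.mulVecLin = range D.mulVecLin :=
    ker_mulVecLin_eq_range_mulVecLin_of_mul_eq_zero hKD (by rw [hK, Fintype.card_fin]; omega)
  rw [rank_fromBlocks_zero₂₂ hker, Nat.add_left_cancel_iff]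
end
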